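/- (Lemma 1, part a.) Let (G_t,H_t), t ∈ ℕ, be a sequence of CSS pairs with adapted duals H*_t, let K > 0 be a fixed real number, and let 0 ≤ p ≤ 1. If the disorder-averaged homological differences converge to zero, lim_{t→∞} [ΔF_e(G_t,H_t;K)]_p = 0, then the average success probabilities of maximum-likelihood decoding converge to one: lim_{t→∞} P_succ(G_t,H_t;K,p) = 1. -/
import Mathlib


open Matrix Filter

/-- Partition function `Z_e(G;K)` of the random-bond Ising model in Wegner's form. -/
noncomputable def Zf {ρ : Type*} [Fintype ρ] [DecidableEq ρ] {n : ℕ}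
    (G : Matrix ρ (Fin n) (ZMod 2)) (e : Fin n → ZMod 2) (K : ℝ) : ℝ :=
  ∑ α : ρ → ZMod 2,
    Real.exp (K * ∑ b : Fin n, (-1 : ℝ) ^ ((e b).val + ((Matrix.vecMul α G) b).val))

/-- `Hs` is an adapted dual of `H`: it stacks `G` on top of `k` extra rows, and its
row space equals `C_H^⊥ = {c | H cᵀ = 0}`. -/
def IsAdaptedDual {rG rH k n : ℕ} (G : Matrix (Fin rG) (Fin n) (ZMod 2))
    (H : Matrix (Fin rH) (Fin n) (ZMod 2))
    (Hs : Matrix (Fin rG ⊕ Fin k) (Fin n) (ZMod 2)) : Prop :=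
  (∀ i, Hs (Sum.inl i) = G i) ∧
  LinearMap.range Hs.vecMulLinear = LinearMap.ker H.mulVecLin

/-- Homological difference `ΔF_e(G,H;K) = ln Z_e(H*;K) − ln Z_e(G;K)`. -/
noncomputable def deltaF {ρ ρ' : Type*} [Fintype ρ] [DecidableEq ρ] [Fintype ρ'] [DecidableEq ρ'] {n : ℕ}
    (G : Matrix ρ (Fin n) (ZMod 2)) (Hs : Matrix ρ' (Fin n) (ZMod 2))
    (e : Fin n → ZMod 2) (K : ℝ) : ℝ :=
  Real.log (Zf Hs e K) - Real.log (Zf G e K)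

/-- Disorder average `[X_e]_p = Σ_e p^{|e|}(1−p)^{n−|e|} X_e`. -/
noncomputable def davg {n : ℕ} (p : ℝ) (X : (Fin n → ZMod 2) → ℝ) : ℝ :=
  ∑ e : Fin n → ZMod 2, p ^ hammingNorm e * (1 - p) ^ (n - hammingNorm e) * X e

/-- Average success probability of maximum-likelihood decoding. -/
noncomputable def Psucc {ρ ρ' : Type*} [Fintype ρ] [DecidableEq ρ] [Fintype ρ'] [DecidableEq ρ'] {n : ℕ}
    (G : Matrix ρ (Fin n) (ZMod 2)) (Hs : Matrix ρ' (Fin n) (ZMod 2))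
    (K p : ℝ) : ℝ :=
  davg p (fun e => Zf G e K / Zf Hs e K)

/-- CSS distance `d_G`: minimum Hamming weight of a vector `c` with `H cᵀ = 0`
that is not in the row space of `G`. -/
noncomputable def dCSS {rG rH n : ℕ} (G : Matrix (Fin rG) (Fin n) (ZMod 2))
    (H : Matrix (Fin rH) (Fin n) (ZMod 2)) : ℕ :=
  sInf {w | ∃ c : Fin n → ZMod 2,
    H.mulVec c = 0 ∧ (¬ ∃ α, Matrix.vecMul α G = c) ∧ hammingNorm c = w}


lemma Zf_pos {ρ : Type*} [Fintype ρ] [DecidableEq ρ] {n : ℕ}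
    (G : Matrix ρ (Fin n) (ZMod 2)) (e : Fin n → ZMod 2) (K : ℝ) : 0 < Zf G e K :=
  Finset.sum_pos (fun _ _ => Real.exp_pos _) Finset.univ_nonempty

lemma Zf_le {ρ σ : Type*} [Fintype ρ] [DecidableEq ρ] [Fintype σ] [DecidableEq σ] {n : ℕ}
    (G : Matrix ρ (Fin n) (ZMod 2)) (Hs : Matrix (ρ ⊕ σ) (Fin n) (ZMod 2))
    (hHs : ∀ i, Hs (Sum.inl i) = G i) (e : Fin n → ZMod 2) (K : ℝ) :
    Zf G e K ≤ Zf Hs e K := by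
  set ext : (ρ → ZMod 2) → (ρ ⊕ σ → ZMod 2) := fun α => Sum.elim α 0 with hext
  have hinj : Function.Injective ext := fun a b h => funext fun i => by
    have := congrFun h (Sum.inl i); simpa [hext] using this
  have hvm : ∀ (α : ρ → ZMod 2) (b : Fin n),
      Matrix.vecMul (ext α) Hs b = Matrix.vecMul α G b := by
    intro α b
    simp [hext, Matrix.vecMul, dotProduct, Fintype.sum_sum_type, hHs]
  calc Zf G e K
      = ∑ α : ρ → ZMod 2,
          Real.exp (K * ∑ b : Fin n, (-1 : ℝ) ^ ((e b).val + ((Matrix.vecMul (ext α) Hs) b).val)) := by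
        unfold Zf; congr 1; funext α; simp_rw [hvm]
    _ = ∑ β ∈ Finset.univ.image ext,
          Real.exp (K * ∑ b : Fin n, (-1 : ℝ) ^ ((e b).val + ((Matrix.vecMul β Hs) b).val)) := by
        rw [Finset.sum_image (fun a _ b _ h => hinj h)]
    _ ≤ Zf Hs e K :=
        Finset.sum_le_sum_of_subset_of_nonneg (Finset.subset_univ _)
          (fun _ _ _ => (Real.exp_pos _).le)

lemma weight_prod {n : ℕ} (p : ℝ) (e : Fin n → ZMod 2) :
    p ^ hammingNorm e * (1 - p) ^ (n - hammingNorm e)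
      = ∏ b : Fin n, (if e b ≠ 0 then p else 1 - p) := by
  have hn : hammingNorm e = (Finset.univ.filter fun b : Fin n => e b ≠ 0).card := rfl
  have key : (Finset.filter (fun x : Fin n => ¬ e x ≠ 0) Finset.univ).card
      = n - hammingNorm e := by
    have h := Finset.card_filter_add_card_filter_not
      (s := (Finset.univ : Finset (Fin n))) (p := fun b => e b ≠ 0)
    rw [Finset.card_univ, Fintype.card_fin] at h
    omega
  rw [Finset.prod_ite, Finset.prod_const, Finset.prod_const, key, hn]

lemma weight_sum {n : ℕ} (p : ℝ) :
    ∑ e : Fin n → ZMod 2, p ^ hammingNorm e * (1 - p) ^ (n - hammingNorm e) = 1 := by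
  simp_rw [weight_prod]
  rw [← Fintype.prod_sum (fun (_ : Fin n) (x : ZMod 2) => if x ≠ 0 then p else 1 - p)]
  have h1 : (∑ x : ZMod 2, if x ≠ 0 then p else 1 - p) = 1 := by
    rw [show (Finset.univ : Finset (ZMod 2)) = {0, 1} by decide]
    norm_num
  simp only [h1, Finset.prod_const, one_pow]

lemma weight_nonneg {n : ℕ} {p : ℝ} (hp0 : 0 ≤ p) (hp1 : p ≤ 1) (e : Fin n → ZMod 2) :
    0 ≤ p ^ hammingNorm e * (1 - p) ^ (n - hammingNorm e) :=
  mul_nonneg (pow_nonneg hp0 _) (pow_nonneg (by linarith) _)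

lemma davg_one {n : ℕ} (p : ℝ) : davg p (fun _ : Fin n → ZMod 2 => 1) = 1 := by
  unfold davg; simp only [mul_one]; exact weight_sum p

lemma davg_mono {n : ℕ} {p : ℝ} (hp0 : 0 ≤ p) (hp1 : p ≤ 1)
    {X Y : (Fin n → ZMod 2) → ℝ} (h : ∀ e, X e ≤ Y e) : davg p X ≤ davg p Y :=
  Finset.sum_le_sum fun e _ => mul_le_mul_of_nonneg_left (h e) (weight_nonneg hp0 hp1 e)

lemma davg_sub {n : ℕ} (p : ℝ) (X Y : (Fin n → ZMod 2) → ℝ) :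
    davg p (fun e => X e - Y e) = davg p X - davg p Y := by
  unfold davg; simp only [mul_sub, Finset.sum_sub_distrib]

lemma ratio_key {zg zhs : ℝ} (hg : 0 < zg) (hle : zg ≤ zhs) :
    1 - (Real.log zhs - Real.log zg) ≤ zg / zhs := by
  have hhs : 0 < zhs := lt_of_lt_of_le hg hle
  have h1 := Real.log_le_sub_one_of_pos (div_pos hg hhs)
  rw [Real.log_div hg.ne' hhs.ne'] at h1
  linarith

/-- Lemma 1(a): if the disorder-averaged homological differences tend to zero, then the
average ML-decoding success probabilities tend to one. -/
theorem stmt6 (rG rH kk nn : ℕ → ℕ)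
    (G : ∀ t, Matrix (Fin (rG t)) (Fin (nn t)) (ZMod 2))
    (H : ∀ t, Matrix (Fin (rH t)) (Fin (nn t)) (ZMod 2))
    (hGH : ∀ t, G t * (H t)ᵀ = 0)
    (hk : ∀ t, kk t = nn t - (G t).rank - (H t).rank)
    (Hs : ∀ t, Matrix (Fin (rG t) ⊕ Fin (kk t)) (Fin (nn t)) (ZMod 2))
    (hHs : ∀ t, IsAdaptedDual (G t) (H t) (Hs t))
    (K : ℝ) (hK : 0 < K) (p : ℝ) (hp0 : 0 ≤ p) (hp1 : p ≤ 1)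
    (hconv : Tendsto (fun t => davg p (fun e => deltaF (G t) (Hs t) e K))
      atTop (nhds 0)) :
    Tendsto (fun t => Psucc (G t) (Hs t) K p) atTop (nhds 1) := by
  have hub : ∀ t, Psucc (G t) (Hs t) K p ≤ 1 := by
    intro t
    have h := davg_mono hp0 hp1 (X := fun e => Zf (G t) e K / Zf (Hs t) e K)
      (Y := fun _ => 1) (fun e => by
        have hg := Zf_pos (G t) e K
        have hle := Zf_le (G t) (Hs t) (hHs t).1 e K
        exact div_le_one_of_le₀ hle (le_trans hg.le hle))
    simpa [Psucc, davg_one] using h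
  have hlb : ∀ t, 1 - davg p (fun e => deltaF (G t) (Hs t) e K)
      ≤ Psucc (G t) (Hs t) K p := by
    intro t
    have h := davg_mono hp0 hp1
      (X := fun e => 1 - deltaF (G t) (Hs t) e K)
      (Y := fun e => Zf (G t) e K / Zf (Hs t) e K) (fun e => by
        have hg := Zf_pos (G t) e K
        have hle := Zf_le (G t) (Hs t) (hHs t).1 e K
        simpa [deltaF] using ratio_key hg hle)
    calc 1 - davg p (fun e => deltaF (G t) (Hs t) e K)
        = davg p (fun e => 1 - deltaF (G t) (Hs t) e K) := by
          rw [davg_sub]; simp [davg_one]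
      _ ≤ Psucc (G t) (Hs t) K p := h
  have hlow : Tendsto (fun t => 1 - davg p (fun e => deltaF (G t) (Hs t) e K))
      atTop (nhds 1) := by
    simpa using tendsto_const_nhds.sub hconv
  exact tendsto_of_tendsto_of_tendsto_of_le_of_le hlow tendsto_const_nhds hlb hub
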